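/- arXiv:1910.02737 — 2 statements merged into one kernel-verified Lean document; each statement's English description precedes it below -/
import Mathlib

section
/- For every integer n ≥ 2, the set of admissible configurations of size n (i.e., interlaced collections of pairwise disjoint chains of positive integers with n entries in total and smallest entry equal to 1) is finite and has exactly 2^(n−2) elements. -/
/-- The maximum entry of a finite set of integers (`0` for the empty set). -/
def fmax (C : Finset ℤ) : ℤ := WithBot.unbotD 0 C.max

/-- The minimum entry of a finite set of integers (`0` for the empty set). -/
def fmin (C : Finset ℤ) : ℤ := WithTop.untopD 0 C.min

/-- A *chain* is a nonempty set of integers of the form `{c, c-2, …, c-2k}`. -/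
def IsChainSet (C : Finset ℤ) : Prop :=
  ∃ (c : ℤ) (k : ℕ), C = (Finset.range (k + 1)).image (fun i : ℕ => c - 2 * (i : ℤ))

/-- Two chains with disjoint entries, with maxima `A, B` and minima `a, b`, are *linked*
if `A > B > a` or `B > A > b`. -/
def LinkedChains (C D : Finset ℤ) : Prop :=
  Disjoint C D ∧
    ((fmax D < fmax C ∧ fmin C < fmax D) ∨ (fmax C < fmax D ∧ fmin D < fmax C))

/-- The set of all entries of a collection of chains. -/
def entriesOf (S : Finset (Finset ℤ)) : Finset ℤ := S.biUnion id

/-- A finite collection of pairwise disjoint chains. -/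
def IsChainCollection (S : Finset (Finset ℤ)) : Prop :=
  (∀ C ∈ S, IsChainSet C) ∧ ∀ C ∈ S, ∀ D ∈ S, C ≠ D → Disjoint C D

/-- A collection of pairwise disjoint chains is *interlaced* if any two of its chains are
joined by a finite sequence of chains of the collection in which consecutive chains are
linked. -/
def Interlaced (S : Finset (Finset ℤ)) : Prop :=
  ∀ C ∈ S, ∀ D ∈ S,
    Relation.ReflTransGen (fun X Y => X ∈ S ∧ Y ∈ S ∧ LinkedChains X Y) C D

/-- An *admissible configuration of size `n`*: an interlaced collection of pairwise disjoint
chains of positive integers with `n` entries in total and smallest entry equal to `1`. -/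
def AdmissibleConfig (n : ℕ) (S : Finset (Finset ℤ)) : Prop :=
  IsChainCollection S ∧ Interlaced S ∧ (entriesOf S).card = n ∧
    (∀ x ∈ entriesOf S, 0 < x) ∧ (1 : ℤ) ∈ entriesOf S

/-!
Let `N` be the largest entry of an admissible configuration `S` of size `n + 1 ≥ 2`. The chain
of `N` also contains `N - 2`, since a chain `{N}` would be linked to no other chain. Deleting the
chain `{N - 1}` if it occurs, and otherwise the entry `N`, leaves an admissible configuration `T`
of size `n` (a chain ending at `N - 1` that is not a singleton reaches below `N - 2`, so it stays
linked to the shortened chain of `N`). Writing `M` for the largest entry of `T`, `S` is recovered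
from `T` by one of two moves, told apart by whether `N - 1` is an entry of `S`: `growTop` puts
`M + 2` on the chain of `M`, and `growBelowTop` puts `M + 1` on the chain of `M - 1`, or adds the
chain `{M - 1}` if `M - 1` is not an entry. For `n ≥ 2` both moves always produce admissible
configurations, so the count doubles from size `n` to `n + 1`. The only configuration of size `1`
is `{{1}}`, and one of size `2` has no room for both `N - 2` and `N - 1`, so `{{1, 3}}` is the
only configuration of size `2`.
-/

open Finset

section Extrema

variable {C : Finset ℤ} {a x : ℤ}

lemma fmax_eq_max' (h : C.Nonempty) : fmax C = C.max' h := by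
  simp [fmax, ← coe_max' h]

lemma fmin_eq_min' (h : C.Nonempty) : fmin C = C.min' h := by
  simp [fmin, ← coe_min' h]

lemma fmax_mem (h : C.Nonempty) : fmax C ∈ C := fmax_eq_max' h ▸ max'_mem C h

lemma fmin_mem (h : C.Nonempty) : fmin C ∈ C := fmin_eq_min' h ▸ min'_mem C h

lemma le_fmax (hx : x ∈ C) : x ≤ fmax C := fmax_eq_max' ⟨x, hx⟩ ▸ le_max' C x hx

lemma fmin_le (hx : x ∈ C) : fmin C ≤ x := fmin_eq_min' ⟨x, hx⟩ ▸ min'_le C x hx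

lemma fmax_eq_of_mem (ha : a ∈ C) (h : ∀ x ∈ C, x ≤ a) : fmax C = a :=
  le_antisymm (h _ (fmax_mem ⟨a, ha⟩)) (le_fmax ha)

lemma fmin_eq_of_mem (ha : a ∈ C) (h : ∀ x ∈ C, a ≤ x) : fmin C = a :=
  le_antisymm (fmin_le ha) (h _ (fmin_mem ⟨a, ha⟩))

@[simp] lemma fmax_singleton : fmax {a} = a := fmax_eq_of_mem (mem_singleton_self a) (by simp)

@[simp] lemma fmin_singleton : fmin {a} = a := fmin_eq_of_mem (mem_singleton_self a) (by simp)

lemma fmax_insert_of_fmax_lt (h : fmax C < a) : fmax (insert a C) = a :=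
  fmax_eq_of_mem (mem_insert_self a C) fun x hx ↦ by
    rcases mem_insert.mp hx with rfl | hx
    exacts [le_rfl, (le_fmax hx).trans h.le]

lemma fmin_insert_of_fmax_lt (hC : C.Nonempty) (h : fmax C < a) :
    fmin (insert a C) = fmin C :=
  fmin_eq_of_mem (mem_insert_of_mem (fmin_mem hC)) fun x hx ↦ by
    rcases mem_insert.mp hx with rfl | hx
    exacts [(fmin_le (fmax_mem hC)).trans h.le, fmin_le hx]

end Extrema

def chainSet (c : ℤ) (k : ℕ) : Finset ℤ :=
  (range (k + 1)).image fun i : ℕ ↦ c - 2 * (i : ℤ)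

section Chains

variable {C : Finset ℤ} {c x y : ℤ} {k : ℕ}

lemma mem_chainSet : x ∈ chainSet c k ↔ c - 2 * k ≤ x ∧ x ≤ c ∧ 2 ∣ c - x := by
  simp only [chainSet, mem_image, mem_range]
  constructor
  · rintro ⟨i, hi, rfl⟩
    exact ⟨by omega, by omega, ⟨i, by ring⟩⟩
  · rintro ⟨h1, h2, m, hm⟩
    exact ⟨m.toNat, by omega, by omega⟩

lemma fmax_chainSet : fmax (chainSet c k) = c :=
  fmax_eq_of_mem (mem_chainSet.mpr ⟨by omega, le_rfl, by simp⟩) fun _ hx ↦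
    (mem_chainSet.mp hx).2.1

lemma insert_chainSet : insert (c + 2) (chainSet c k) = chainSet (c + 2) (k + 1) := by
  ext x
  simp only [mem_insert, mem_chainSet]
  omega

lemma chainSet_zero : chainSet c 0 = {c} := by
  ext x
  simp only [mem_chainSet, mem_singleton]
  omega

lemma isChainSet_singleton (a : ℤ) : IsChainSet {a} := ⟨a, 0, chainSet_zero.symm⟩

lemma IsChainSet.exists_eq_chainSet_fmax (h : IsChainSet C) : ∃ k, C = chainSet (fmax C) k := by
  obtain ⟨c, k, rfl⟩ := h
  exact ⟨k, by rw [← chainSet, fmax_chainSet]⟩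

lemma IsChainSet.nonempty (h : IsChainSet C) : C.Nonempty := by
  obtain ⟨c, k, rfl⟩ := h
  exact ⟨c, mem_chainSet.mpr ⟨by omega, le_rfl, by simp⟩⟩

lemma IsChainSet.two_dvd_sub (h : IsChainSet C) (hx : x ∈ C) (hy : y ∈ C) : 2 ∣ x - y := by
  obtain ⟨c, k, rfl⟩ := h
  have := (mem_chainSet.mp hx).2.2
  have := (mem_chainSet.mp hy).2.2
  omega

lemma IsChainSet.insert_fmax_add_two (h : IsChainSet C) : IsChainSet (insert (fmax C + 2) C) := by
  obtain ⟨k, hk⟩ := h.exists_eq_chainSet_fmax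
  exact ⟨_, k + 1, by rw [hk, fmax_chainSet, insert_chainSet]; rfl⟩

lemma IsChainSet.eq_singleton_or_fmax_sub_two_mem (h : IsChainSet C) :
    C = {fmax C} ∨ fmax C - 2 ∈ C := by
  obtain ⟨_ | k, hk⟩ := h.exists_eq_chainSet_fmax
  · exact Or.inl (hk.trans chainSet_zero)
  · generalize fmax C = c at hk ⊢
    exact Or.inr (hk ▸ mem_chainSet.mpr ⟨by omega, by omega, ⟨1, by ring⟩⟩)

lemma IsChainSet.erase_fmax (h : IsChainSet C) (h2 : fmax C - 2 ∈ C) :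
    IsChainSet (C.erase (fmax C)) ∧ fmax (C.erase (fmax C)) = fmax C - 2 := by
  obtain ⟨_ | k, hk⟩ := h.exists_eq_chainSet_fmax
  · rw [hk, chainSet_zero] at h2
    simp at h2
  · have : C.erase (fmax C) = chainSet (fmax C - 2) k := by
      rw [hk, fmax_chainSet]
      ext x
      simp only [mem_erase, mem_chainSet]
      omega
    exact ⟨⟨_, k, this⟩, this ▸ fmax_chainSet⟩

end Chains

section Linked

variable {C D : Finset ℤ} {a : ℤ}

lemma LinkedChains.symm (h : LinkedChains C D) : LinkedChains D C :=
  ⟨h.1.symm, h.2.symm⟩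

lemma LinkedChains.ne (h : LinkedChains C D) : C ≠ D := by
  rintro rfl
  obtain ⟨-, h | h⟩ := h <;> exact lt_irrefl _ h.1

lemma linkedChains_singleton_iff :
    LinkedChains {a} D ↔ a ∉ D ∧ a < fmax D ∧ fmin D < a := by
  simp only [LinkedChains, disjoint_singleton_left, fmax_singleton, fmin_singleton]
  constructor
  · rintro ⟨h, ⟨h1, h2⟩ | h'⟩
    exacts [(lt_asymm h1 h2).elim, ⟨h, h'⟩]
  · exact fun ⟨h, h'⟩ ↦ ⟨h, Or.inr h'⟩

lemma LinkedChains.insert_fmax_add_two (hC : C.Nonempty) (hD : D.Nonempty)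
    (h : LinkedChains C D) (hfresh : fmax C + 2 ∉ D) :
    LinkedChains (insert (fmax C + 2) C) D := by
  have hmax : fmax D ≠ fmax C + 2 := fun h' ↦ hfresh (h' ▸ fmax_mem hD)
  refine ⟨disjoint_insert_left.mpr ⟨hfresh, h.1⟩, ?_⟩
  have := h.2
  rw [fmax_insert_of_fmax_lt (by omega), fmin_insert_of_fmax_lt hC (by omega)]
  have := fmin_le (fmax_mem hC)
  omega

lemma LinkedChains.of_insert_fmax_add_two (hC : C.Nonempty) (hD : D.Nonempty)
    (h : LinkedChains (insert (fmax C + 2) C) D) (hlt : fmax D < fmax C + 2)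
    (hgap : fmax D = fmax C + 1 → fmin D < fmax C) : LinkedChains C D := by
  obtain ⟨hdisj, hcases⟩ := h
  have hmax : fmax D ≠ fmax C := fun h' ↦
    disjoint_left.mp hdisj (mem_insert_of_mem (fmax_mem hC)) (h' ▸ fmax_mem hD)
  refine ⟨disjoint_of_subset_left (subset_insert _ _) hdisj, ?_⟩
  rw [fmax_insert_of_fmax_lt (by omega), fmin_insert_of_fmax_lt hC (by omega)] at hcases
  omega

end Linked

def replaceChain (S : Finset (Finset ℤ)) (C C' : Finset ℤ) : Finset (Finset ℤ) :=
  insert C' (S.erase C)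

def extendChain (S : Finset (Finset ℤ)) (v : ℤ) : Finset (Finset ℤ) :=
  S.image fun C ↦ if v ∈ C then insert (v + 2) C else C

def eraseEntry (S : Finset (Finset ℤ)) (v : ℤ) : Finset (Finset ℤ) :=
  (S.image (·.erase v)).erase ∅

section Collections

variable {S : Finset (Finset ℤ)} {C C' D : Finset ℤ} {v x : ℤ}

lemma mem_entriesOf : x ∈ entriesOf S ↔ ∃ C ∈ S, x ∈ C := by
  simp [entriesOf]

lemma subset_entriesOf (hC : C ∈ S) : C ⊆ entriesOf S :=
  fun _ hx ↦ mem_entriesOf.mpr ⟨C, hC, hx⟩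

lemma entriesOf_insert : entriesOf (insert C S) = C ∪ entriesOf S := by
  simp [entriesOf]

lemma entriesOf_insert_singleton {a : ℤ} :
    entriesOf (insert {a} S) = insert a (entriesOf S) := by
  rw [entriesOf_insert, insert_eq]

lemma image_ite_eq_replaceChain (hC : C ∈ S) :
    S.image (fun X ↦ if X = C then C' else X) = replaceChain S C C' := by
  ext Y
  simp only [mem_image, replaceChain, mem_insert, mem_erase]
  constructor
  · rintro ⟨X, hX, rfl⟩
    by_cases h : X = C <;> simp [h, hX]
  · rintro (rfl | ⟨hY, hYS⟩)
    exacts [⟨C, hC, by simp⟩, ⟨Y, hYS, by simp [hY]⟩]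

lemma replaceChain_replaceChain (hC : C ∈ S) (hC' : C' ∉ S.erase C) :
    replaceChain (replaceChain S C C') C' C = S := by
  rw [replaceChain, replaceChain, erase_insert hC', insert_erase hC]

namespace IsChainCollection

lemma eq_of_mem (hS : IsChainCollection S) (hC : C ∈ S) (hD : D ∈ S) (hxC : x ∈ C)
    (hxD : x ∈ D) : C = D :=
  by_contra fun hne ↦ disjoint_left.mp (hS.2 C hC D hD hne) hxC hxD

lemma entriesOf_erase (hS : IsChainCollection S) (hC : C ∈ S) :
    entriesOf (S.erase C) = entriesOf S \ C := by
  ext x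
  simp only [mem_entriesOf, mem_sdiff, mem_erase]
  constructor
  · rintro ⟨D, ⟨hDC, hD⟩, hx⟩
    exact ⟨⟨D, hD, hx⟩, fun hxC ↦ hDC (hS.eq_of_mem hD hC hx hxC)⟩
  · rintro ⟨⟨D, hD, hx⟩, hxC⟩
    exact ⟨D, ⟨fun h ↦ hxC (h ▸ hx), hD⟩, hx⟩

lemma entriesOf_replaceChain (hS : IsChainCollection S) (hC : C ∈ S) :
    entriesOf (replaceChain S C C') = C' ∪ (entriesOf S \ C) := by
  rw [replaceChain, entriesOf_insert, hS.entriesOf_erase hC]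

lemma subset {T : Finset (Finset ℤ)} (hS : IsChainCollection S) (hT : T ⊆ S) :
    IsChainCollection T :=
  ⟨fun C hC ↦ hS.1 C (hT hC), fun C hC D hD ↦ hS.2 C (hT hC) D (hT hD)⟩

protected lemma insert (hS : IsChainCollection S) (hC : IsChainSet C)
    (hdisj : ∀ D ∈ S, D ≠ C → Disjoint C D) : IsChainCollection (insert C S) := by
  refine ⟨fun X hX ↦ ?_, fun X hX Y hY hXY ↦ ?_⟩
  · rcases mem_insert.mp hX with rfl | hX
    exacts [hC, hS.1 X hX]
  · rcases mem_insert.mp hX with rfl | hXS <;> rcases mem_insert.mp hY with rfl | hYS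
    · exact absurd rfl hXY
    · exact hdisj Y hYS (Ne.symm hXY)
    · exact (hdisj X hXS hXY).symm
    · exact hS.2 X hXS Y hYS hXY

protected lemma replaceChain (hS : IsChainCollection S) (hC' : IsChainSet C')
    (hdisj : ∀ D ∈ S, D ≠ C → Disjoint C' D) : IsChainCollection (replaceChain S C C') :=
  (hS.subset (erase_subset C S)).insert hC' fun D hD _ ↦ hdisj D (mem_erase.mp hD).2
    (mem_erase.mp hD).1

lemma extendChain_eq (hS : IsChainCollection S) (hC : C ∈ S) (hv : v ∈ C) :
    extendChain S v = replaceChain S C (insert (v + 2) C) := by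
  rw [extendChain, ← image_ite_eq_replaceChain hC]
  refine image_congr fun X hX ↦ ?_
  by_cases hXC : X = C
  · simp [hXC, hv]
  · have hvX : v ∉ X := fun hvX ↦ hXC (hS.eq_of_mem hX hC hvX hv)
    simp [hXC, hvX]

lemma eraseEntry_eq (hS : IsChainCollection S) (hC : C ∈ S) (hv : v ∈ C)
    (hne : (C.erase v).Nonempty) : eraseEntry S v = replaceChain S C (C.erase v) := by
  rw [eraseEntry, ← image_ite_eq_replaceChain hC,
    image_congr fun X hX ↦ show X.erase v = if X = C then C.erase v else X by
      by_cases hXC : X = C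
      · simp [hXC]
      · have hvX : v ∉ X := fun hvX ↦ hXC (hS.eq_of_mem hX hC hvX hv)
        simp [hXC, hvX],
    image_ite_eq_replaceChain hC, erase_eq_of_notMem]
  simp only [replaceChain, mem_insert, mem_erase, not_or]
  exact ⟨fun h ↦ hne.ne_empty h.symm, fun ⟨_, h⟩ ↦ (hS.1 ∅ h).nonempty.ne_empty rfl⟩

lemma entriesOf_erase_singleton {a : ℤ} (hS : IsChainCollection S) (ha : {a} ∈ S) :
    entriesOf (S.erase {a}) = (entriesOf S).erase a := by
  rw [hS.entriesOf_erase ha, sdiff_singleton_eq_erase]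

lemma entriesOf_extendChain (hS : IsChainCollection S) (hC : C ∈ S) :
    entriesOf (extendChain S (fmax C)) = insert (fmax C + 2) (entriesOf S) := by
  rw [hS.extendChain_eq hC (fmax_mem (hS.1 C hC).nonempty), hS.entriesOf_replaceChain hC,
    insert_union, union_sdiff_of_subset (subset_entriesOf hC)]

lemma entriesOf_eraseEntry (hS : IsChainCollection S) (hC : C ∈ S) (h2 : fmax C - 2 ∈ C) :
    entriesOf (eraseEntry S (fmax C)) = (entriesOf S).erase (fmax C) := by
  have hne : (C.erase (fmax C)).Nonempty := ⟨_, mem_erase.mpr ⟨by omega, h2⟩⟩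
  rw [hS.eraseEntry_eq hC (fmax_mem ⟨_, h2⟩) hne, hS.entriesOf_replaceChain hC]
  ext x
  simp only [mem_union, mem_erase, mem_sdiff]
  constructor
  · rintro (⟨hx, hxC⟩ | ⟨hxS, hxC⟩)
    · exact ⟨hx, subset_entriesOf hC hxC⟩
    · exact ⟨fun h ↦ hxC (h ▸ fmax_mem ⟨_, h2⟩), hxS⟩
  · rintro ⟨hx, hxS⟩
    by_cases hxC : x ∈ C
    exacts [Or.inl ⟨hx, hxC⟩, Or.inr ⟨hxS, hxC⟩]

end IsChainCollection

namespace Interlaced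

lemma image (hS : Interlaced S) (f : Finset ℤ → Finset ℤ)
    (hf : ∀ X ∈ S, ∀ Y ∈ S, LinkedChains X Y → f X = f Y ∨ LinkedChains (f X) (f Y)) :
    Interlaced (S.image f) := by
  intro _ hC _ hD
  obtain ⟨C, hCS, rfl⟩ := mem_image.mp hC
  obtain ⟨D, hDS, rfl⟩ := mem_image.mp hD
  refine Relation.ReflTransGen.lift' f (fun X Y ⟨hX, hY, hXY⟩ ↦ ?_) _ _ (hS C hCS D hDS)
  rcases hf X hX Y hY hXY with h | h
  · simp only [Function.onFun, h, Relation.ReflTransGen.refl]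
  · exact .single ⟨mem_image_of_mem f hX, mem_image_of_mem f hY, h⟩

protected lemma replaceChain (hS : Interlaced S) (hC : C ∈ S)
    (hlink : ∀ D ∈ S, LinkedChains C D → LinkedChains C' D) :
    Interlaced (replaceChain S C C') := by
  rw [← image_ite_eq_replaceChain hC]
  refine hS.image _ fun X hX Y hY hXY ↦ Or.inr ?_
  by_cases hXC : X = C <;> by_cases hYC : Y = C
  · exact absurd (hXC.trans hYC.symm) hXY.ne
  · simpa [hXC, hYC] using hlink Y hY (hXC ▸ hXY)
  · simpa [hXC, hYC] using (hlink X hX (hYC ▸ hXY.symm)).symm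
  · simpa [hXC, hYC] using hXY

protected lemma insert (hS : Interlaced S) (hD : D ∈ S) (h : LinkedChains C D) :
    Interlaced (insert C S) := by
  have hS' : ∀ X ∈ S, ∀ Y ∈ S, Relation.ReflTransGen
      (fun X Y ↦ X ∈ insert C S ∧ Y ∈ insert C S ∧ LinkedChains X Y) X Y :=
    fun X hX Y hY ↦ Relation.ReflTransGen.mono (fun _ _ ⟨h₁, h₂, h₃⟩ ↦
      ⟨mem_insert_of_mem h₁, mem_insert_of_mem h₂, h₃⟩) _ _ (hS X hX Y hY)
  intro X hX Y hY
  rcases mem_insert.mp hX with rfl | hXS <;> rcases mem_insert.mp hY with rfl | hYS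
  · exact .refl
  · exact .head ⟨mem_insert_self _ _, mem_insert_of_mem hD, h⟩ (hS' D hD Y hYS)
  · exact .tail (hS' X hXS D hD) ⟨mem_insert_of_mem hD, mem_insert_self _ _, h.symm⟩
  · exact hS' X hXS Y hYS

protected lemma erase (hS : Interlaced S) (hD : D ∈ S) (hDC : D ≠ C)
    (hleaf : ∀ X ∈ S, LinkedChains C X → X = D) : Interlaced (S.erase C) := by
  by_cases hC : C ∈ S
  · have := hS.image (fun X ↦ if X = C then D else X) fun X hX Y hY hXY ↦ by
      by_cases hXC : X = C
      · simp [hXC, hleaf Y hY (hXC ▸ hXY), hDC]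
      by_cases hYC : Y = C
      · simp [hYC, hleaf X hX (hYC ▸ hXY.symm), hDC]
      · simp [hXC, hYC, hXY]
    rwa [image_ite_eq_replaceChain hC, replaceChain,
      insert_eq_of_mem (mem_erase.mpr ⟨hDC, hD⟩)] at this
  · rwa [erase_eq_of_notMem hC]

end Interlaced

end Collections

def topEntry (S : Finset (Finset ℤ)) : ℤ := fmax (entriesOf S)

lemma le_topEntry {S : Finset (Finset ℤ)} {x : ℤ} (hx : x ∈ entriesOf S) : x ≤ topEntry S :=
  le_fmax hx

def growTop (S : Finset (Finset ℤ)) : Finset (Finset ℤ) := extendChain S (topEntry S)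

def growBelowTop (S : Finset (Finset ℤ)) : Finset (Finset ℤ) :=
  if topEntry S - 1 ∈ entriesOf S then extendChain S (topEntry S - 1)
  else insert {topEntry S - 1} S

def shrinkTop (S : Finset (Finset ℤ)) : Finset (Finset ℤ) :=
  if {topEntry S - 1} ∈ S then S.erase {topEntry S - 1} else eraseEntry S (topEntry S)

namespace AdmissibleConfig

variable {n : ℕ} {S : Finset (Finset ℤ)} {C D : Finset ℤ} {a : ℤ}

protected lemma extendChain (h : AdmissibleConfig n S) (hC : C ∈ S)
    (hfresh : fmax C + 2 ∉ entriesOf S) :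
    AdmissibleConfig (n + 1) (extendChain S (fmax C)) := by
  obtain ⟨hS, hI, hcard, hpos, hone⟩ := h
  have hCne := (hS.1 C hC).nonempty
  have hfreshD : ∀ D ∈ S, fmax C + 2 ∉ D := fun D hD hx ↦ hfresh (subset_entriesOf hD hx)
  have hent := hS.entriesOf_extendChain hC
  rw [hS.extendChain_eq hC (fmax_mem hCne)] at hent ⊢
  refine ⟨hS.replaceChain (hS.1 C hC).insert_fmax_add_two fun D hD hDC ↦ ?_,
    hI.replaceChain hC fun D hD hCD ↦ ?_, ?_, ?_, ?_⟩
  · exact disjoint_insert_left.mpr ⟨hfreshD D hD, hS.2 C hC D hD (Ne.symm hDC)⟩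
  · exact hCD.insert_fmax_add_two hCne (hS.1 D hD).nonempty (hfreshD D hD)
  · rw [hent, card_insert_of_notMem hfresh, hcard]
  · have := hpos _ (subset_entriesOf hC (fmax_mem hCne))
    simpa [hent, forall_mem_insert] using ⟨by omega, hpos⟩
  · exact hent ▸ mem_insert_of_mem hone

lemma eraseEntry_fmax (h : AdmissibleConfig (n + 1) S) (hC : C ∈ S) (h2 : fmax C - 2 ∈ C)
    (htop : ∀ D ∈ S, fmax D ≤ fmax C)
    (hgap : ∀ D ∈ S, fmax D = fmax C - 1 → fmin D < fmax C - 2) :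
    AdmissibleConfig n (eraseEntry S (fmax C)) ∧
      extendChain (eraseEntry S (fmax C)) (fmax C - 2) = S := by
  obtain ⟨hS, hI, hcard, hpos, hone⟩ := h
  obtain ⟨hC'chain, hC'max⟩ := (hS.1 C hC).erase_fmax h2
  set C' := C.erase (fmax C)
  have hC'mem : fmax C - 2 ∈ C' := mem_erase.mpr ⟨by omega, h2⟩
  have hCeq : insert (fmax C' + 2) C' = C := by
    rw [hC'max, sub_add_cancel, insert_erase (fmax_mem ⟨_, h2⟩)]
  have hent := hS.entriesOf_eraseEntry hC h2
  have hC'S : C' ∉ S.erase C := fun hC'S ↦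
    (mem_erase.mp hC'S).1 (hS.eq_of_mem (mem_erase.mp hC'S).2 hC hC'mem h2)
  rw [hS.eraseEntry_eq hC (fmax_mem ⟨_, h2⟩) ⟨_, hC'mem⟩] at hent ⊢
  have hT : AdmissibleConfig n (replaceChain S C C') := by
    refine ⟨hS.replaceChain hC'chain fun D hD hDC ↦ ?_, hI.replaceChain hC fun D hD hCD ↦ ?_,
      ?_, ?_, ?_⟩
    · exact disjoint_of_subset_left (erase_subset _ _) (hS.2 C hC D hD (Ne.symm hDC))
    · have hDne := (hS.1 D hD).nonempty
      have hne : fmax D ≠ fmax C := fun heq ↦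
        disjoint_left.mp hCD.1 (fmax_mem ⟨_, h2⟩) (heq ▸ fmax_mem hDne)
      rw [← hCeq] at hCD
      have := htop D hD
      exact hCD.of_insert_fmax_add_two ⟨_, hC'mem⟩ hDne (by omega)
        fun h' ↦ by have := hgap D hD (by omega); omega
    · rw [hent, card_erase_of_mem (subset_entriesOf hC (fmax_mem ⟨_, h2⟩)), hcard,
        add_tsub_cancel_right]
    · exact fun x hx ↦ hpos x (mem_of_mem_erase (hent ▸ hx))
    · have := hpos _ (subset_entriesOf hC h2)
      exact hent ▸ mem_erase.mpr ⟨by omega, hone⟩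
  refine ⟨hT, ?_⟩
  rw [hT.1.extendChain_eq (mem_insert_self _ _) hC'mem, ← hC'max, hCeq,
    replaceChain_replaceChain hC hC'S]

lemma topEntry_mem (h : AdmissibleConfig n S) : topEntry S ∈ entriesOf S :=
  fmax_mem ⟨1, h.2.2.2.2⟩

lemma fmax_le_topEntry (h : AdmissibleConfig n S) (hC : C ∈ S) : fmax C ≤ topEntry S :=
  le_topEntry (subset_entriesOf hC (fmax_mem (h.1.1 C hC).nonempty))

lemma exists_fmax_eq_topEntry (h : AdmissibleConfig n S) : ∃ C ∈ S, fmax C = topEntry S := by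
  obtain ⟨C, hC, hN⟩ := mem_entriesOf.mp h.topEntry_mem
  exact ⟨C, hC, le_antisymm (h.fmax_le_topEntry hC) (le_fmax hN)⟩

lemma fmax_eq_of_mem_topEntry_sub_one (h : AdmissibleConfig n S) (hD : D ∈ S)
    (hD₁ : topEntry S - 1 ∈ D) : fmax D = topEntry S - 1 := by
  have := h.fmax_le_topEntry hD
  have := le_fmax hD₁
  have := (h.1.1 D hD).two_dvd_sub (fmax_mem ⟨_, hD₁⟩) hD₁
  omega

lemma singleton_topEntry_notMem (h : AdmissibleConfig (n + 2) S) : {topEntry S} ∉ S := by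
  intro hN
  have hall : ∀ D ∈ S, D = {topEntry S} := fun D hD ↦ by
    rcases (h.2.1 _ hN D hD).cases_head with h' | ⟨X, ⟨-, hX, hlink⟩, -⟩
    · exact h'.symm
    · have := (linkedChains_singleton_iff.mp hlink).2.1
      have := h.fmax_le_topEntry hX
      omega
  have hsub : entriesOf S ⊆ {topEntry S} := fun x hx ↦ by
    obtain ⟨D, hD, hxD⟩ := mem_entriesOf.mp hx
    exact hall D hD ▸ hxD
  have := card_le_card hsub
  rw [h.2.2.1, card_singleton] at this
  omega

lemma topEntry_sub_two_mem (h : AdmissibleConfig (n + 2) S) (hC : C ∈ S)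
    (hCtop : fmax C = topEntry S) : topEntry S - 2 ∈ C := by
  rcases (h.1.1 C hC).eq_singleton_or_fmax_sub_two_mem with hC₁ | hC₂
  · exact absurd (hCtop ▸ hC₁ ▸ hC) h.singleton_topEntry_notMem
  · rwa [hCtop] at hC₂

lemma insert_singleton (h : AdmissibleConfig n S) (hD : D ∈ S) (hlink : LinkedChains {a} D)
    (ha : a ∉ entriesOf S) (hpos : 0 < a) : AdmissibleConfig (n + 1) (insert {a} S) := by
  obtain ⟨hS, hI, hcard, hpos', hone⟩ := h
  have hent : entriesOf (insert {a} S) = insert a (entriesOf S) := entriesOf_insert_singleton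
  refine ⟨hS.insert (isChainSet_singleton a) fun X hX _ ↦ ?_, hI.insert hD hlink, ?_, ?_, ?_⟩
  · exact disjoint_singleton_left.mpr fun haX ↦ ha (subset_entriesOf hX haX)
  · rw [hent, card_insert_of_notMem ha, hcard]
  · simpa [hent, forall_mem_insert] using ⟨hpos, hpos'⟩
  · exact hent ▸ mem_insert_of_mem hone

lemma erase_singleton (h : AdmissibleConfig (n + 1) S) (ha : {a} ∈ S) (hD : D ∈ S)
    (hDa : D ≠ {a}) (hleaf : ∀ X ∈ S, LinkedChains {a} X → X = D) (ha₁ : a ≠ 1) :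
    AdmissibleConfig n (S.erase {a}) := by
  obtain ⟨hS, hI, hcard, hpos, hone⟩ := h
  have hent := hS.entriesOf_erase_singleton ha
  refine ⟨hS.subset (erase_subset _ _), hI.erase hD hDa hleaf, ?_, ?_, ?_⟩
  · rw [hent, card_erase_of_mem (subset_entriesOf ha (mem_singleton_self a)), hcard,
      add_tsub_cancel_right]
  · exact fun x hx ↦ hpos x (mem_of_mem_erase (hent ▸ hx))
  · exact hent ▸ mem_erase.mpr ⟨Ne.symm ha₁, hone⟩

lemma topEntry_extendChain (h : AdmissibleConfig n S) (hC : C ∈ S)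
    (hlt : topEntry S < fmax C + 2) : topEntry (extendChain S (fmax C)) = fmax C + 2 := by
  rw [topEntry, h.1.entriesOf_extendChain hC, fmax_insert_of_fmax_lt hlt]

lemma eraseEntry_extendChain (h : AdmissibleConfig n S) (hC : C ∈ S)
    (hfresh : fmax C + 2 ∉ entriesOf S) :
    eraseEntry (extendChain S (fmax C)) (fmax C + 2) = S := by
  have hS' := (h.extendChain hC hfresh).1
  have hCfresh : fmax C + 2 ∉ C := fun hx ↦ hfresh (subset_entriesOf hC hx)
  rw [h.1.extendChain_eq hC (fmax_mem (h.1.1 C hC).nonempty)] at hS' ⊢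
  rw [hS'.eraseEntry_eq (mem_insert_self _ _) (mem_insert_self _ _)
      (by rw [erase_insert hCfresh]; exact (h.1.1 C hC).nonempty),
    erase_insert hCfresh, replaceChain_replaceChain hC fun hmem ↦
      hfresh (subset_entriesOf (mem_erase.mp hmem).2 (mem_insert_self _ _))]


protected lemma growTop (h : AdmissibleConfig n S) :
    AdmissibleConfig (n + 1) (growTop S) ∧ shrinkTop (growTop S) = S ∧
      topEntry (growTop S) - 1 ∉ entriesOf (growTop S) := by
  obtain ⟨C, hC, hCtop⟩ := h.exists_fmax_eq_topEntry
  have hfresh : fmax C + 2 ∉ entriesOf S := fun hx ↦ by have := le_topEntry hx; omega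
  have hgap : fmax C + 2 - 1 ∉ entriesOf (extendChain S (fmax C)) := by
    rw [h.1.entriesOf_extendChain hC, mem_insert, not_or]
    exact ⟨by omega, fun hx ↦ by have := le_topEntry hx; omega⟩
  rw [growTop, ← hCtop, h.topEntry_extendChain hC (by omega)]
  refine ⟨h.extendChain hC hfresh, ?_, hgap⟩
  rw [shrinkTop, h.topEntry_extendChain hC (by omega),
    if_neg fun hmem ↦ hgap (subset_entriesOf hmem (mem_singleton_self _)),
    h.eraseEntry_extendChain hC hfresh]

lemma growBelowTop_of_mem (h : AdmissibleConfig (n + 2) S)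
    (hmem : topEntry S - 1 ∈ entriesOf S) :
    AdmissibleConfig (n + 3) (growBelowTop S) ∧ shrinkTop (growBelowTop S) = S ∧
      topEntry (growBelowTop S) - 1 ∈ entriesOf (growBelowTop S) := by
  obtain ⟨D, hD, hD₁⟩ := mem_entriesOf.mp hmem
  have hDmax := h.fmax_eq_of_mem_topEntry_sub_one hD hD₁
  have hfresh : fmax D + 2 ∉ entriesOf S := fun hx ↦ by have := le_topEntry hx; omega
  have htop := h.topEntry_extendChain hD (by omega)
  have e : fmax D + 2 - 1 = topEntry S := by omega
  have hsingle : {topEntry S} ∉ extendChain S (fmax D) := by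
    simp only [extendChain, mem_image, not_exists, not_and]
    intro X hX hXeq
    split_ifs at hXeq
    · have := hXeq ▸ mem_insert_self (fmax D + 2) X
      simp at this
      omega
    · exact h.singleton_topEntry_notMem (hXeq ▸ hX)
  rw [growBelowTop, if_pos hmem, ← hDmax, htop, e]
  refine ⟨h.extendChain hD hfresh, ?_, ?_⟩
  · rw [shrinkTop, htop, e, if_neg hsingle, h.eraseEntry_extendChain hD hfresh]
  · rw [h.1.entriesOf_extendChain hD]
    exact mem_insert_of_mem h.topEntry_mem

lemma growBelowTop_of_notMem (h : AdmissibleConfig (n + 2) S)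
    (hgap : topEntry S - 1 ∉ entriesOf S) :
    AdmissibleConfig (n + 3) (growBelowTop S) ∧ shrinkTop (growBelowTop S) = S ∧
      topEntry (growBelowTop S) - 1 ∈ entriesOf (growBelowTop S) := by
  obtain ⟨C, hC, hCtop⟩ := h.exists_fmax_eq_topEntry
  have hC₂ := h.topEntry_sub_two_mem hC hCtop
  have hpos := h.2.2.2.1 _ (subset_entriesOf hC hC₂)
  have hlink : LinkedChains {topEntry S - 1} C := by
    have := fmin_le hC₂
    exact linkedChains_singleton_iff.mpr
      ⟨fun hx ↦ hgap (subset_entriesOf hC hx), by omega, by omega⟩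
  have htop : topEntry (insert {topEntry S - 1} S) = topEntry S := by
    rw [topEntry, entriesOf_insert_singleton]
    refine fmax_eq_of_mem (mem_insert_of_mem h.topEntry_mem) fun x hx ↦ ?_
    rcases mem_insert.mp hx with rfl | hx
    · omega
    · exact le_topEntry hx
  have hnotS : {topEntry S - 1} ∉ S := fun h' ↦
    hgap (subset_entriesOf h' (mem_singleton_self _))
  rw [growBelowTop, if_neg hgap]
  refine ⟨h.insert_singleton hC hlink hgap (by omega), ?_, ?_⟩
  · rw [shrinkTop, htop, if_pos (mem_insert_self _ _), erase_insert hnotS]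
  · rw [htop, entriesOf_insert_singleton]
    exact mem_insert_self _ _

protected lemma growBelowTop (h : AdmissibleConfig (n + 2) S) :
    AdmissibleConfig (n + 3) (growBelowTop S) ∧ shrinkTop (growBelowTop S) = S ∧
      topEntry (growBelowTop S) - 1 ∈ entriesOf (growBelowTop S) := by
  by_cases hmem : topEntry S - 1 ∈ entriesOf S
  exacts [h.growBelowTop_of_mem hmem, h.growBelowTop_of_notMem hmem]

lemma shrinkTop_of_notMem (h : AdmissibleConfig (n + 2) S)
    (hgap : topEntry S - 1 ∉ entriesOf S) :
    AdmissibleConfig (n + 1) (shrinkTop S) ∧ growTop (shrinkTop S) = S := by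
  obtain ⟨C, hC, hCtop⟩ := h.exists_fmax_eq_topEntry
  have hC₂ := h.topEntry_sub_two_mem hC hCtop
  rw [← hCtop] at hgap hC₂
  obtain ⟨hT, hS⟩ := h.eraseEntry_fmax hC hC₂ (fun D hD ↦ hCtop ▸ h.fmax_le_topEntry hD)
    fun D hD hD₁ ↦ absurd (subset_entriesOf hD (hD₁ ▸ fmax_mem (h.1.1 D hD).nonempty)) hgap
  have hsh : shrinkTop S = eraseEntry S (fmax C) := by
    rw [shrinkTop, ← hCtop, if_neg fun h' ↦ hgap (subset_entriesOf h' (mem_singleton_self _))]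
  have htop : topEntry (eraseEntry S (fmax C)) = fmax C - 2 := by
    rw [topEntry, h.1.entriesOf_eraseEntry hC hC₂]
    refine fmax_eq_of_mem (mem_erase.mpr ⟨by omega, subset_entriesOf hC hC₂⟩) fun x hx ↦ ?_
    obtain ⟨hxC, hxS⟩ := mem_erase.mp hx
    have := hCtop ▸ le_topEntry hxS
    have : x ≠ fmax C - 1 := fun h' ↦ hgap (h' ▸ hxS)
    omega
  rw [hsh]
  exact ⟨hT, by rw [growTop, htop, hS]⟩

lemma shrinkTop_of_singleton_mem (h : AdmissibleConfig (n + 2) S)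
    (hsingle : {topEntry S - 1} ∈ S) :
    AdmissibleConfig (n + 1) (shrinkTop S) ∧ growBelowTop (shrinkTop S) = S := by
  obtain ⟨C, hC, hCtop⟩ := h.exists_fmax_eq_topEntry
  have hpos := h.2.2.2.1 _ (subset_entriesOf hC (h.topEntry_sub_two_mem hC hCtop))
  have hNC : topEntry S ∈ C := hCtop ▸ fmax_mem (h.1.1 C hC).nonempty
  have hleaf : ∀ X ∈ S, LinkedChains {topEntry S - 1} X → X = C := fun X hX hlink ↦ by
    have := (linkedChains_singleton_iff.mp hlink).2.1
    have := h.fmax_le_topEntry hX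
    have hXtop : fmax X = topEntry S := by omega
    exact h.1.eq_of_mem hX hC (fmax_mem (h.1.1 X hX).nonempty) (hXtop ▸ hNC)
  have hCne : C ≠ {topEntry S - 1} := fun h' ↦ by have := mem_singleton.mp (h' ▸ hNC); omega
  have hent := h.1.entriesOf_erase_singleton hsingle
  have htop : topEntry (S.erase {topEntry S - 1}) = topEntry S :=
    (congrArg fmax hent).trans <| fmax_eq_of_mem (mem_erase.mpr ⟨by omega, h.topEntry_mem⟩)
      fun x hx ↦ le_topEntry (mem_of_mem_erase hx)
  rw [shrinkTop, if_pos hsingle]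
  refine ⟨h.erase_singleton hsingle hC hCne hleaf (by omega), ?_⟩
  rw [growBelowTop, htop, if_neg (by simp [hent]), insert_erase hsingle]

lemma shrinkTop_of_mem_of_singleton_notMem (h : AdmissibleConfig (n + 2) S)
    (hmem : topEntry S - 1 ∈ entriesOf S) (hsingle : {topEntry S - 1} ∉ S) :
    AdmissibleConfig (n + 1) (shrinkTop S) ∧ growBelowTop (shrinkTop S) = S := by
  obtain ⟨C, hC, hCtop⟩ := h.exists_fmax_eq_topEntry
  have hC₂ := h.topEntry_sub_two_mem hC hCtop
  obtain ⟨D, hD, hD₁⟩ := mem_entriesOf.mp hmem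
  have hDmax := h.fmax_eq_of_mem_topEntry_sub_one hD hD₁
  have hD₃ : fmin D < topEntry S - 2 := by
    rcases (h.1.1 D hD).eq_singleton_or_fmax_sub_two_mem with hD' | hD'
    · exact absurd (hDmax ▸ hD' ▸ hD) hsingle
    · have := fmin_le hD'
      omega
  rw [← hCtop] at hC₂ hmem hsingle hD₃
  obtain ⟨hT, hS⟩ := h.eraseEntry_fmax hC hC₂ (fun X hX ↦ hCtop ▸ h.fmax_le_topEntry hX)
    fun X hX hX₁ ↦ by
      rwa [h.1.eq_of_mem hX hD (hX₁ ▸ fmax_mem (h.1.1 X hX).nonempty) (hCtop ▸ hD₁)]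
  have hent := h.1.entriesOf_eraseEntry hC hC₂
  have htop : topEntry (eraseEntry S (fmax C)) = fmax C - 1 := by
    rw [topEntry, hent]
    refine fmax_eq_of_mem (mem_erase.mpr ⟨by omega, hmem⟩) fun x hx ↦ ?_
    have := hCtop ▸ le_topEntry (mem_of_mem_erase hx)
    have := ne_of_mem_erase hx
    omega
  have hsub : fmax C - 1 - 1 = fmax C - 2 := by ring
  rw [shrinkTop, ← hCtop, if_neg hsingle]
  refine ⟨hT, ?_⟩
  rw [growBelowTop, htop, hsub,
    if_pos (hent ▸ mem_erase.mpr ⟨by omega, subset_entriesOf hC hC₂⟩), hS]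

lemma shrinkTop_of_mem (h : AdmissibleConfig (n + 2) S) (hmem : topEntry S - 1 ∈ entriesOf S) :
    AdmissibleConfig (n + 1) (shrinkTop S) ∧ growBelowTop (shrinkTop S) = S := by
  by_cases hsingle : {topEntry S - 1} ∈ S
  exacts [h.shrinkTop_of_singleton_mem hsingle, h.shrinkTop_of_mem_of_singleton_notMem hmem hsingle]

lemma topEntry_sub_one_notMem_of_two (h : AdmissibleConfig 2 S) :
    topEntry S - 1 ∉ entriesOf S := by
  intro hmem
  obtain ⟨C, hC, hCtop⟩ := h.exists_fmax_eq_topEntry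
  have h3 : 2 < (entriesOf S).card := two_lt_card_iff.mpr ⟨_, _, _, h.topEntry_mem, hmem,
    subset_entriesOf hC (h.topEntry_sub_two_mem (n := 0) hC hCtop), by omega, by omega, by omega⟩
  exact lt_irrefl _ (h.2.2.1 ▸ h3)

end AdmissibleConfig

lemma setOf_admissibleConfig_one : {S | AdmissibleConfig 1 S} = {{{1}}} := by
  ext S
  simp only [Set.mem_ofPred_eq, Set.mem_singleton_iff]
  constructor
  · intro h
    have hent : entriesOf S = {1} :=
      (eq_of_subset_of_card_le (singleton_subset_iff.mpr h.2.2.2.2) (by simp [h.2.2.1])).symm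
    have hall : ∀ C ∈ S, C = {1} := fun C hC ↦
      (h.1.1 C hC).nonempty.subset_singleton_iff.mp (hent ▸ subset_entriesOf hC)
    obtain ⟨C, hC, -⟩ := mem_entriesOf.mp h.2.2.2.2
    exact eq_singleton_iff_unique_mem.mpr ⟨hall C hC ▸ hC, hall⟩
  · rintro rfl
    have hent : entriesOf {{1}} = {1} := by simp [entriesOf]
    refine ⟨⟨by simpa using isChainSet_singleton 1, by simp⟩, ?_, by simp [hent],
      by simp [hent], by simp [hent]⟩
    intro C hC D hD
    rw [mem_singleton.mp hC, mem_singleton.mp hD]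

lemma setOf_admissibleConfig_two :
    {S | AdmissibleConfig 2 S} = growTop '' {S | AdmissibleConfig 1 S} := by
  ext S
  refine ⟨fun h ↦ ?_, fun ⟨T, hT, hTS⟩ ↦ hTS ▸ (AdmissibleConfig.growTop hT).1⟩
  obtain ⟨hT, hTS⟩ := AdmissibleConfig.shrinkTop_of_notMem (n := 0) h
    (AdmissibleConfig.topEntry_sub_one_notMem_of_two h)
  exact ⟨_, hT, hTS⟩

lemma setOf_admissibleConfig_add_three (n : ℕ) :
    {S | AdmissibleConfig (n + 2 + 1) S} =
      growTop '' {S | AdmissibleConfig (n + 2) S} ∪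
        growBelowTop '' {S | AdmissibleConfig (n + 2) S} := by
  ext S
  refine ⟨fun h ↦ ?_, ?_⟩
  · by_cases hmem : topEntry S - 1 ∈ entriesOf S
    · obtain ⟨hT, hTS⟩ := AdmissibleConfig.shrinkTop_of_mem (n := n + 1) h hmem
      exact Or.inr ⟨_, hT, hTS⟩
    · obtain ⟨hT, hTS⟩ := AdmissibleConfig.shrinkTop_of_notMem (n := n + 1) h hmem
      exact Or.inl ⟨_, hT, hTS⟩
  · rintro (⟨T, hT, rfl⟩ | ⟨T, hT, rfl⟩)
    exacts [(AdmissibleConfig.growTop hT).1, (AdmissibleConfig.growBelowTop hT).1]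

/-- **Corollary 3.10.** For every `n ≥ 2`, the set of admissible configurations of size `n`
is finite and has exactly `2 ^ (n - 2)` elements. -/
theorem number_of_admissible_configurations (n : ℕ) (hn : 2 ≤ n) :
    {S : Finset (Finset ℤ) | AdmissibleConfig n S}.Finite ∧
    {S : Finset (Finset ℤ) | AdmissibleConfig n S}.ncard = 2 ^ (n - 2) := by
  induction n, hn using Nat.le_induction with
  | base => simp [setOf_admissibleConfig_two, setOf_admissibleConfig_one]
  | succ n hn ih =>
    obtain ⟨m, rfl⟩ := Nat.exists_eq_add_of_le' hn
    obtain ⟨hfin, hcard⟩ := ih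
    set A := {S | AdmissibleConfig (m + 2) S}
    have hinj₀ : Set.InjOn growTop A :=
      Set.LeftInvOn.injOn fun _ hS ↦ (AdmissibleConfig.growTop hS).2.1
    have hinj₁ : Set.InjOn growBelowTop A :=
      Set.LeftInvOn.injOn fun _ hS ↦ (AdmissibleConfig.growBelowTop hS).2.1
    have hdisj : Disjoint (growTop '' A) (growBelowTop '' A) := by
      refine Set.disjoint_left.mpr ?_
      rintro _ ⟨S, hS, rfl⟩ ⟨T, hT, hTS⟩
      exact (AdmissibleConfig.growTop hS).2.2 (hTS ▸ (AdmissibleConfig.growBelowTop hT).2.2)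
    rw [setOf_admissibleConfig_add_three, Set.ncard_union_eq hdisj (hfin.image _) (hfin.image _),
      hinj₀.ncard_image, hinj₁.ncard_image, hcard]
    refine ⟨(hfin.image _).union (hfin.image _), ?_⟩
    rw [show m + 2 + 1 - 2 = m + 2 - 2 + 1 by omega, pow_succ, mul_two]
end

section
/- Let n ≥ 2 and ρ = (n−1, n−2, …, 1, 0) ∈ ℝⁿ. Let λ ∈ ℝⁿ satisfy λ_j − λ_{j+1} ∈ {1/2, 1} for every 1 ≤ j ≤ n−1. For an arbitrary permutation w of {1, …, n}, define δ ∈ ℝⁿ by δ_j = 2λ_{w(j)} − ρ_{w(j)} + ρ_j. Then for every 1 ≤ i ≤ n−1, Σ_{j=1}^{i} (δ_j − 2ρ_j) ≤ (i/n) · Σ_{j=1}^{n} (δ_j − 2ρ_j). -/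
open Finset in
lemma aux_filter_sum (n i : ℕ) (g : ℕ → ℝ) (hi : i ≤ n) :
    ∑ j ∈ Finset.univ.filter (fun j : Fin n => (j : ℕ) < i), g (j : ℕ)
      = ∑ t ∈ Finset.range i, g t := by
  rw [Finset.sum_filter]
  rw [Fin.sum_univ_eq_sum_range (fun t => if t < i then g t else 0) n]
  rw [← Finset.sum_filter]
  congr 1
  ext t; simp only [Finset.mem_filter, Finset.mem_range]
  omega

lemma aux_filter_card (n i : ℕ) (hi : i ≤ n) :
    (Finset.univ.filter (fun j : Fin n => (j : ℕ) < i)).card = i := by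
  rw [Finset.card_filter]
  rw [Fin.sum_univ_eq_sum_range (fun t => if t < i then 1 else 0) n]
  rw [← Finset.sum_filter]
  have h : (Finset.range n).filter (fun t => t < i) = Finset.range i := by
    ext t; simp only [Finset.mem_filter, Finset.mem_range]; omega
  rw [h]; simp

lemma aux_gauss (m : ℕ) : ∑ t ∈ Finset.range m, (t : ℝ) = m * (m - 1) / 2 := by
  induction m with
  | zero => simp
  | succ k ih => rw [Finset.sum_range_succ, ih]; push_cast; ring

lemma aux_le_apply {k n : ℕ} (f : Fin k → Fin n) (hf : StrictMono f) :
    ∀ v : ℕ, (hv : v < k) → v ≤ (f ⟨v, hv⟩ : ℕ) := by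
  intro v
  induction v with
  | zero => intro _; exact Nat.zero_le _
  | succ u ih =>
    intro hv
    have h1 : f ⟨u, by omega⟩ < f ⟨u + 1, hv⟩ := hf (by simp [Fin.lt_def])
    have h2 := ih (by omega)
    have h3 := Fin.lt_def.mp h1
    omega

lemma aux_subset_sum_le {n i : ℕ} (hi : i ≤ n) (μ : Fin n → ℝ)
    (hmono : ∀ a b : Fin n, (a : ℕ) ≤ (b : ℕ) → μ b ≤ μ a)
    (S : Finset (Fin n)) (hS : S.card = i) :
    ∑ m ∈ S, μ m ≤ ∑ j ∈ Finset.univ.filter (fun j : Fin n => (j : ℕ) < i), μ j := by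
  set f := S.orderEmbOfFin hS with hf
  have himg : Finset.univ.image f = S := by
    ext m
    simp only [Finset.mem_image, Finset.mem_univ, true_and]
    constructor
    · rintro ⟨t, rfl⟩; exact Finset.orderEmbOfFin_mem S hS t
    · intro hm
      have : m ∈ Set.range f := by rw [hf, Finset.range_orderEmbOfFin]; exact hm
      obtain ⟨t, ht⟩ := this; exact ⟨t, ht⟩
  have hsum : ∑ m ∈ S, μ m = ∑ t : Fin i, μ (f t) := by
    rw [← himg, Finset.sum_image (fun x _ y _ h => f.injective h)]
  set ν : ℕ → ℝ := fun v => if h : v < n then μ ⟨v, h⟩ else 0 with hν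
  have hR : ∑ j ∈ Finset.univ.filter (fun j : Fin n => (j : ℕ) < i), μ j
      = ∑ t ∈ Finset.range i, ν t := by
    rw [← aux_filter_sum n i ν hi]
    apply Finset.sum_congr rfl
    intro j _
    rw [hν]; simp [j.isLt]
  rw [hsum, hR, ← Fin.sum_univ_eq_sum_range ν i]
  apply Finset.sum_le_sum
  intro t _
  have h1 : (t : ℕ) ≤ (f t : ℕ) := aux_le_apply f f.strictMono t t.isLt
  have h2 : ν t = μ ⟨t, lt_of_lt_of_le t.isLt hi⟩ := by
    rw [hν]; simp [lt_of_lt_of_le t.isLt hi]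
  rw [h2]
  exact hmono _ _ h1

/-- **Lemma 3.4 for `sl(n, ℂ)`, in standard coordinates.** Let `ρ = (n-1, n-2, …, 1, 0)` and
let `λ ∈ ℝⁿ` satisfy `λ_j - λ_{j+1} ∈ {1/2, 1}` for all `j`.  For any permutation `w` of
`{1, …, n}`, set `δ_j = 2λ_{w(j)} - ρ_{w(j)} + ρ_j`.  Then for every `1 ≤ i ≤ n - 1`,
`Σ_{j ≤ i} (δ_j - 2ρ_j) ≤ (i/n) Σ_{j ≤ n} (δ_j - 2ρ_j)`, i.e. the `K`-type `V_δ` is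
unitarily small. -/
theorem unitarily_small_inequality (n : ℕ) (hn : 2 ≤ n)
    (lam : Fin n → ℝ)
    (hlam : ∀ j : ℕ, (hj : j + 1 < n) →
      lam ⟨j, by omega⟩ - lam ⟨j + 1, hj⟩ = 1 / 2 ∨
      lam ⟨j, by omega⟩ - lam ⟨j + 1, hj⟩ = 1)
    (w : Equiv.Perm (Fin n))
    (ρ : Fin n → ℝ) (hρ : ∀ j : Fin n, ρ j = (n : ℝ) - 1 - (j : ℕ))
    (δ : Fin n → ℝ) (hδ : ∀ j : Fin n, δ j = 2 * lam (w j) - ρ (w j) + ρ j)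
    (i : ℕ) (hi1 : 1 ≤ i) (hi2 : i ≤ n - 1) :
    ∑ j ∈ Finset.univ.filter (fun j : Fin n => (j : ℕ) < i), (δ j - 2 * ρ j) ≤
      ((i : ℝ) / (n : ℝ)) * ∑ j : Fin n, (δ j - 2 * ρ j) := by
  classical
  have hin : i < n := by omega
  have hN0 : (0 : ℝ) < (n : ℝ) := by positivity
  set N : ℝ := (n : ℝ) with hNdef
  set I : ℝ := (i : ℝ) with hIdef
  set A : Finset (Fin n) := Finset.univ.filter (fun j : Fin n => (j : ℕ) < i) with hAdef
  set B : Finset (Fin n) := Finset.univ.filter (fun j : Fin n => ¬ (j : ℕ) < i) with hBdef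
  obtain ⟨μ, hμ⟩ : ∃ μ : Fin n → ℝ, ∀ k, μ k = 2 * lam k - ρ k :=
    ⟨fun k => 2 * lam k - ρ k, fun k => rfl⟩
  -- step lemma
  have hstep : ∀ a b : Fin n, (b : ℕ) = (a : ℕ) + 1 →
      0 ≤ μ a - μ b ∧ μ a - μ b ≤ 1 := by
    intro a b hab
    have hj : (a : ℕ) + 1 < n := hab ▸ b.isLt
    have hl := hlam (a : ℕ) hj
    have e2 : (⟨(a : ℕ) + 1, hj⟩ : Fin n) = b := Fin.ext (by simp [hab])
    simp only [Fin.eta, e2] at hl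
    have hrho : ρ a - ρ b = 1 := by rw [hρ a, hρ b, hab]; push_cast; ring
    simp only [hμ]
    rcases hl with hl | hl <;> constructor <;> linarith
  -- Lipschitz lemma
  have hlip : ∀ (d : ℕ) (a b : Fin n), (b : ℕ) = (a : ℕ) + d →
      0 ≤ μ a - μ b ∧ μ a - μ b ≤ (d : ℝ) := by
    intro d
    induction d with
    | zero =>
      intro a b hab
      have : b = a := Fin.ext (by omega)
      subst this; simp
    | succ u ih =>
      intro a b hab
      have hu : (a : ℕ) + u < n := by have := b.isLt; omega
      have h1 := ih a ⟨(a : ℕ) + u, hu⟩ rfl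
      have h2 := hstep ⟨(a : ℕ) + u, hu⟩ b (by simp; omega)
      push_cast
      constructor <;> linarith [h1.1, h1.2, h2.1, h2.2]
  have hmono : ∀ a b : Fin n, (a : ℕ) ≤ (b : ℕ) → μ b ≤ μ a := by
    intro a b h
    have := (hlip ((b : ℕ) - (a : ℕ)) a b (by omega)).1
    linarith
  have hlipAB : ∀ a b : Fin n, (a : ℕ) ≤ (b : ℕ) →
      μ a - μ b ≤ ((b : ℕ) : ℝ) - ((a : ℕ) : ℝ) := by
    intro a b h
    have h2 := (hlip ((b : ℕ) - (a : ℕ)) a b (by omega)).2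
    rw [Nat.cast_sub h] at h2
    exact h2
  -- cardinalities
  have hAcard : A.card = i := aux_filter_card n i (le_of_lt hin)
  have hABcard : A.card + B.card = n := by
    rw [hAdef, hBdef, Finset.card_filter_add_card_filter_not]
    simp
  have hBcard : B.card = n - i := by omega
  have hBcardR : (B.card : ℝ) = N - I := by
    rw [hBcard, Nat.cast_sub (le_of_lt hin)]
  -- value sums
  have hsumAval : ∑ j ∈ A, ((j : ℕ) : ℝ) = I * (I - 1) / 2 := by
    rw [hAdef, aux_filter_sum n i (fun t => (t : ℝ)) (le_of_lt hin), aux_gauss]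
  have hsumUval : ∑ j : Fin n, ((j : ℕ) : ℝ) = N * (N - 1) / 2 := by
    rw [Fin.sum_univ_eq_sum_range (fun t => (t : ℝ)) n, aux_gauss]
  have hsumBval : ∑ j ∈ B, ((j : ℕ) : ℝ) = N * (N - 1) / 2 - I * (I - 1) / 2 := by
    have h := Finset.sum_filter_add_sum_filter_not Finset.univ
      (fun j : Fin n => (j : ℕ) < i) (fun j : Fin n => ((j : ℕ) : ℝ))
    rw [← hAdef, ← hBdef] at h
    linarith [h, hsumAval, hsumUval]
  -- rho sums
  have hsumArho : ∑ j ∈ A, ρ j = I * (N - 1) - I * (I - 1) / 2 := by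
    have h1 : ∑ j ∈ A, ρ j = ∑ j ∈ A, ((N - 1) - ((j : ℕ) : ℝ)) :=
      Finset.sum_congr rfl (fun j _ => hρ j)
    rw [h1, Finset.sum_sub_distrib, Finset.sum_const, hAcard, hsumAval,
      nsmul_eq_mul]
  have hsumUrho : ∑ j : Fin n, ρ j = N * (N - 1) / 2 := by
    have h1 : ∑ j : Fin n, ρ j = ∑ j : Fin n, ((N - 1) - ((j : ℕ) : ℝ)) :=
      Finset.sum_congr rfl (fun j _ => hρ j)
    rw [h1, Finset.sum_sub_distrib, Finset.sum_const, Finset.card_univ,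
      Fintype.card_fin, hsumUval, nsmul_eq_mul]
    ring
  -- mu sums
  have hT : ∑ k : Fin n, μ k = (∑ j ∈ A, μ j) + (∑ j ∈ B, μ j) := by
    rw [hAdef, hBdef, Finset.sum_filter_add_sum_filter_not]
  -- sorted rearrangement
  have hsort : ∑ j ∈ A, μ (w j) ≤ ∑ j ∈ A, μ j := by
    have hinj : ∀ x ∈ A, ∀ y ∈ A, w x = w y → x = y := by
      intro x _ y _ h; exact w.injective h
    rw [← Finset.sum_image hinj]
    have := aux_subset_sum_le (le_of_lt hin) μ hmono (A.image w)
      (by rw [Finset.card_image_of_injective A w.injective, hAcard])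
    rw [← hAdef] at this
    exact this
  -- double sum bound
  have hdouble : (N - I) * (∑ j ∈ A, μ j) - I * (∑ j ∈ B, μ j) ≤
      I * (N * (N - 1) / 2 - I * (I - 1) / 2) - (N - I) * (I * (I - 1) / 2) := by
    have h1 : ∑ m ∈ A, ((N - I) * μ m - (∑ j ∈ B, μ j)) ≤
        ∑ m ∈ A, ((N * (N - 1) / 2 - I * (I - 1) / 2) - (N - I) * ((m : ℕ) : ℝ)) := by
      apply Finset.sum_le_sum
      intro m hm
      have hmlt : (m : ℕ) < i := (Finset.mem_filter.mp hm).2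
      have inner1 : ∑ k ∈ B, (μ m - μ k) = (N - I) * μ m - (∑ j ∈ B, μ j) := by
        rw [Finset.sum_sub_distrib, Finset.sum_const, nsmul_eq_mul, hBcardR]
      have inner2 : ∑ k ∈ B, (((k : ℕ) : ℝ) - ((m : ℕ) : ℝ)) =
          (N * (N - 1) / 2 - I * (I - 1) / 2) - (N - I) * ((m : ℕ) : ℝ) := by
        rw [Finset.sum_sub_distrib, Finset.sum_const, nsmul_eq_mul, hBcardR,
          hsumBval]
      rw [← inner1, ← inner2]
      apply Finset.sum_le_sum
      intro k hk
      have hkge : ¬ (k : ℕ) < i := (Finset.mem_filter.mp hk).2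
      exact hlipAB m k (by omega)
    rw [Finset.sum_sub_distrib, Finset.sum_sub_distrib, Finset.sum_const,
      Finset.sum_const, ← Finset.mul_sum, ← Finset.mul_sum, hAcard,
      nsmul_eq_mul, nsmul_eq_mul, hsumAval, ← hIdef] at h1
    nlinarith [h1]
  -- assemble
  have hdecomp : ∀ j : Fin n, δ j - 2 * ρ j = μ (w j) - ρ j := by
    intro j; rw [hδ j]; simp only [hμ]; ring
  have hgoalL : ∑ j ∈ A, (δ j - 2 * ρ j) =
      (∑ j ∈ A, μ (w j)) - (I * (N - 1) - I * (I - 1) / 2) := by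
    rw [Finset.sum_congr rfl (fun j _ => hdecomp j), Finset.sum_sub_distrib,
      hsumArho]
  have hgoalR : ∑ j : Fin n, (δ j - 2 * ρ j) =
      (∑ j ∈ A, μ j) + (∑ j ∈ B, μ j) - N * (N - 1) / 2 := by
    rw [Finset.sum_congr rfl (fun j _ => hdecomp j), Finset.sum_sub_distrib,
      hsumUrho]
    have h2 : ∑ j : Fin n, μ (w j) = ∑ k : Fin n, μ k := Equiv.sum_comp w μ
    rw [h2, hT]
  rw [hgoalL, hgoalR, div_mul_eq_mul_div, le_div_iff₀ hN0]
  have hmulX : (∑ j ∈ A, μ (w j)) * N ≤ (∑ j ∈ A, μ j) * N :=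
    mul_le_mul_of_nonneg_right hsort (le_of_lt hN0)
  nlinarith [hdouble, hmulX]
end
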